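/- arXiv:2509.21757 — 3 statements merged into one kernel-verified Lean document; each statement's English description precedes it below -/
import Mathlib

section
/- For all real x > 0, the function h(x) = (1+x)(e - (1 + 1/x)^x) satisfies h(x) > e/2. -/
/-!
Since `(1 + x) (e - e (2x + 1) / (2x + 2)) = e/2`, it suffices to show
`(1 + 1/x)^x < e (2x + 1) / (2x + 2)`, which after taking logarithms is the positivity of
`G(x) = 1 + x log x - (x + 1) log (x + 1) + log (x + 1/2)`.
Since `G'(x) = 2/(2x + 1) - log (1 + 1/x)` is negative (the first term of the series
`log (1 + 1/x) = 2 ∑ (2x + 1)^{-(2k+1)} / (2k + 1)` already equals `2/(2x + 1)`), `G` is strictly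
decreasing on `(0, ∞)`, and `G(x) → 1 - 1 = 0` as `x → ∞` because `x log (1 + 1/x) → 1`.
-/

open Real Filter Set Topology

theorem StrictAntiOn.lt_of_tendsto_atTop {α β : Type*} [LinearOrder α] [NoMaxOrder α]
    [TopologicalSpace β] [Preorder β] [OrderClosedTopology β] {f : α → β} {a x : α} {l : β}
    (hf : StrictAntiOn f (Ioi a)) (hl : Tendsto f atTop (𝓝 l)) (hx : a < x) : l < f x := by
  have : Nonempty α := ⟨x⟩
  obtain ⟨y, hxy⟩ := exists_gt x
  have hy : a < y := hx.trans hxy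
  have hly : l ≤ f y := le_of_tendsto hl <| (eventually_ge_atTop y).mono fun z hz =>
    hf.antitoneOn hy (hy.trans_le hz) hz
  exact hly.trans_lt (hf hx hy hxy)

theorem two_div_two_mul_add_one_lt_log_one_add_inv {x : ℝ} (hx : 0 < x) :
    2 / (2 * x + 1) < log (1 + x⁻¹) := by
  have hpos : ∀ k : ℕ, 0 < (2 : ℝ) * (1 / (2 * k + 1)) * (1 / (2 * x + 1)) ^ (2 * k + 1) :=
    fun k => by positivity
  simpa [div_eq_mul_inv] using lt_hasSum (hasSum_log_one_add_inv hx) 0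
    (fun k _ => (hpos k).le) 1 one_ne_zero (hpos 1)

theorem tendsto_log_one_add_div_atTop (t : ℝ) :
    Tendsto (fun x : ℝ => log (1 + t / x)) atTop (𝓝 0) := by
  have h : Tendsto (fun x : ℝ => 1 + t / x) atTop (𝓝 1) := by
    simpa using (tendsto_const_nhds (x := (1 : ℝ))).add
      ((tendsto_const_nhds (x := t)).div_atTop tendsto_id)
  rw [← log_one]
  exact (continuousAt_log one_ne_zero).tendsto.comp h

noncomputable def eulerGap (x : ℝ) : ℝ :=
  1 + x * log x - (x + 1) * log (x + 1) + log (x + 1 / 2)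

theorem eulerGap_eq {x : ℝ} (hx : 0 < x) :
    eulerGap x = 1 - x * log (1 + 1 / x) - log (1 + 1 / x) + log (1 + 1 / 2 / x) := by
  rw [eulerGap, one_add_div hx.ne', one_add_div hx.ne', log_div (by positivity) hx.ne',
    log_div (by positivity) hx.ne', add_div' _ _ _ two_ne_zero, log_div (by positivity) two_ne_zero]
  ring_nf

theorem hasDerivAt_eulerGap {x : ℝ} (hx : 0 < x) :
    HasDerivAt eulerGap (2 / (2 * x + 1) - log (1 + x⁻¹)) x := by
  have h1 := hasDerivAt_mul_log hx.ne'
  have h2 := (hasDerivAt_mul_log (by positivity : x + 1 ≠ 0)).comp_add_const x 1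
  have h3 := ((hasDerivAt_id' x).add_const (1 / 2)).log (by positivity : x + 1 / 2 ≠ 0)
  refine (((h1.const_add 1).sub h2).add h3).congr_deriv ?_
  rw [← one_div, one_add_div hx.ne', log_div (by positivity) hx.ne']
  field_simp
  ring

theorem eulerGap_strictAntiOn : StrictAntiOn eulerGap (Ioi 0) := by
  refine strictAntiOn_of_hasDerivWithinAt_neg (convex_Ioi 0)
    (fun x hx => (hasDerivAt_eulerGap hx).continuousAt.continuousWithinAt)
    (fun x hx => (hasDerivAt_eulerGap (interior_subset hx)).hasDerivWithinAt) fun x hx => ?_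
  rw [interior_Ioi] at hx
  exact sub_neg.2 (two_div_two_mul_add_one_lt_log_one_add_inv hx)

theorem tendsto_eulerGap_atTop : Tendsto eulerGap atTop (𝓝 0) := by
  have h := ((tendsto_const_nhds (x := (1 : ℝ))).sub (tendsto_mul_log_one_add_div_atTop 1)).sub
    (tendsto_log_one_add_div_atTop 1) |>.add (tendsto_log_one_add_div_atTop (1 / 2))
  rw [sub_self, sub_zero, add_zero] at h
  exact h.congr' <| (eventually_gt_atTop 0).mono fun x hx => (eulerGap_eq hx).symm

theorem one_add_one_div_rpow_lt {x : ℝ} (hx : 0 < x) :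
    (1 + 1 / x) ^ x < exp 1 * (2 * x + 1) / (2 * x + 2) := by
  have hgap : 0 < eulerGap x := eulerGap_strictAntiOn.lt_of_tendsto_atTop tendsto_eulerGap_atTop hx
  rw [eulerGap_eq hx] at hgap
  calc (1 + 1 / x) ^ x = exp (x * log (1 + 1 / x)) := by
        rw [rpow_def_of_pos (by positivity), mul_comm]
    _ < exp (1 - log (1 + 1 / x) + log (1 + 1 / 2 / x)) := exp_lt_exp.2 (by linarith)
    _ = exp 1 * (2 * x + 1) / (2 * x + 2) := by
        rw [exp_add, exp_sub, exp_log (by positivity), exp_log (by positivity)]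
        field_simp

theorem stmt_17 (x : ℝ) (hx : 0 < x) :
    Real.exp 1 / 2 < (1 + x) * (Real.exp 1 - (1 + 1/x) ^ x) := by
  calc exp 1 / 2 = (1 + x) * (exp 1 - exp 1 * (2 * x + 1) / (2 * x + 2)) := by
        field_simp
        ring
    _ < (1 + x) * (exp 1 - (1 + 1 / x) ^ x) := by
        gcongr
        exact one_add_one_div_rpow_lt hx
end

section
/- For all real x > 0, (1 + 1/x)^x < e (1 - 1/(2(x+1))). -/
/-!
Taking logarithms and substituting `u = 1/x`, the inequality becomes `0 < carlemanGap u` for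
`u > 0`. The gap vanishes at `u = 0`, and its derivative `u/(2+u) + log((2+u)/(2+2u))` is
positive for `u > 0` by the strict inequality `log y < y - 1` at `y = (2+2u)/(2+u)`.
-/

open Real Set

noncomputable def carlemanGap (u : ℝ) : ℝ :=
  u * (1 + log ((2 + u) / (2 + 2 * u))) - log (1 + u)

lemma hasDerivAt_carlemanGap {u : ℝ} (hu : -1 < u) :
    HasDerivAt carlemanGap (u / (2 + u) + log ((2 + u) / (2 + 2 * u))) u := by
  have h2u : 2 + u ≠ 0 := by linarith
  have h22u : 2 + 2 * u ≠ 0 := by linarith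
  have h1u : 1 + u ≠ 0 := by linarith
  have hratio : HasDerivAt (fun u : ℝ => (2 + u) / (2 + 2 * u))
      ((1 * (2 + 2 * u) - (2 + u) * 2) / (2 + 2 * u) ^ 2) u :=
    ((hasDerivAt_id u).const_add 2).div
      (by simpa using ((hasDerivAt_id u).const_mul 2).const_add 2) h22u
  have hgap : HasDerivAt carlemanGap _ u := ((hasDerivAt_id u).mul
      ((hratio.log (div_ne_zero h2u h22u)).const_add 1)).sub
    (((hasDerivAt_id u).const_add 1).log h1u)
  convert hgap using 1
  simp only [id]
  field_simp
  ring

lemma deriv_carlemanGap_pos {u : ℝ} (hu : 0 < u) : 0 < deriv carlemanGap u := by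
  rw [(hasDerivAt_carlemanGap (by linarith)).deriv]
  have h2u : 0 < 2 + u := by linarith
  have hlog : log ((2 + 2 * u) / (2 + u)) < (2 + 2 * u) / (2 + u) - 1 :=
    log_lt_sub_one_of_pos (by positivity) (by rw [Ne, div_eq_one_iff_eq h2u.ne']; linarith)
  have hsub : (2 + 2 * u) / (2 + u) - 1 = u / (2 + u) := by field_simp; ring
  have hflip : log ((2 + u) / (2 + 2 * u)) = -log ((2 + 2 * u) / (2 + u)) := by
    rw [← log_inv, inv_div]
  linarith

lemma carlemanGap_pos {u : ℝ} (hu : 0 < u) : 0 < carlemanGap u := by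
  have hmono : StrictMonoOn carlemanGap (Ici 0) := by
    refine strictMonoOn_of_deriv_pos (convex_Ici 0) ?_ ?_
    · exact fun v hv => (hasDerivAt_carlemanGap (by linarith [mem_Ici.mp hv])).continuousAt
        |>.continuousWithinAt
    · intro v hv
      rw [interior_Ici] at hv
      exact deriv_carlemanGap_pos hv
  simpa [carlemanGap] using hmono self_mem_Ici (mem_Ici.mpr hu.le) hu

lemma mul_log_one_add_one_div_lt {x : ℝ} (hx : 0 < x) :
    x * log (1 + 1 / x) < 1 + log (1 - 1 / (2 * (x + 1))) := by
  have hgap := carlemanGap_pos (one_div_pos.mpr hx)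
  have hratio : (2 + 1 / x) / (2 + 2 * (1 / x)) = 1 - 1 / (2 * (x + 1)) := by
    field_simp
    ring
  rw [carlemanGap, hratio] at hgap
  have hscaled := mul_pos hx hgap
  rw [mul_sub, ← mul_assoc, mul_one_div_cancel hx.ne', one_mul] at hscaled
  linarith

theorem stmt_18 (x : ℝ) (hx : 0 < x) :
    (1 + 1/x) ^ x < Real.exp 1 * (1 - 1/(2*(x + 1))) := by
  have hfactor : 0 < 1 - 1 / (2 * (x + 1)) := by
    rw [sub_pos, div_lt_one (by linarith)]
    linarith
  rw [rpow_def_of_pos (by positivity), ← exp_log hfactor, ← exp_add, exp_lt_exp, mul_comm]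
  exact mul_log_one_add_one_div_lt hx
end

section
/- For all real x > 0, e - (1 + 1/x)^x ≤ (e - 1)/(1 + x). -/
open Real Set

lemma chord (q : ℝ) (h1 : (Real.exp 1)⁻¹ ≤ q) (h2 : q ≤ 1) :
    Real.exp 1 / (Real.exp 1 - 1) * (q - 1) ≤ Real.log q := by
  have he : (1:ℝ) < Real.exp 1 := by
    have := Real.add_one_lt_exp (one_ne_zero); linarith
  set e := Real.exp 1 with hE
  have he0 : (0:ℝ) < e := by linarith
  have hne : e ≠ 0 := ne_of_gt he0
  have hne1 : e - 1 ≠ 0 := by intro h; linarith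
  set a : ℝ := e / (e - 1) * (1 - q) with ha
  have ha0 : 0 ≤ a := mul_nonneg (div_nonneg (le_of_lt he0) (by linarith)) (by linarith)
  have ha1 : a ≤ 1 := by
    rw [ha, div_mul_eq_mul_div, div_le_one (by linarith)]
    have h3 : e⁻¹ ≤ q := h1
    have : e * (1 - q) ≤ e * (1 - e⁻¹) :=
      mul_le_mul_of_nonneg_left (by linarith) (by linarith)
    calc e * (1-q) ≤ e * (1 - e⁻¹) := this
      _ = e - 1 := by field_simp
  have hq : a • e⁻¹ + (1 - a) • (1:ℝ) = q := by
    simp only [smul_eq_mul, ha, mul_one]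
    field_simp
    ring
  have hx : e⁻¹ ∈ Set.Ioi (0:ℝ) := by simp only [Set.mem_Ioi]; positivity
  have hy : (1:ℝ) ∈ Set.Ioi (0:ℝ) := by simp [Set.mem_Ioi]
  have hb : (0:ℝ) ≤ 1 - a := by linarith
  have hab : a + (1 - a) = 1 := by ring
  have key := (strictConcaveOn_log_Ioi.concaveOn).2 hx hy ha0 hb hab
  rw [hq] at key
  have hlogi : Real.log e⁻¹ = -1 := by rw [Real.log_inv, hE, Real.log_exp]
  simp only [smul_eq_mul, hlogi, Real.log_one, mul_zero, add_zero, mul_neg, mul_one] at key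
  have hfin : e / (e - 1) * (q - 1) = -a := by rw [ha]; ring
  linarith

lemma psi_nonneg {u : ℝ} (hu : 0 ≤ u) :
    0 ≤ Real.log (1+u) - Real.log (Real.exp 1 + u) + Real.exp 1 / (Real.exp 1 + u) := by
  have he : (1:ℝ) < Real.exp 1 := by
    have := Real.add_one_lt_exp (one_ne_zero); linarith
  set e := Real.exp 1 with hE
  have h1u : (0:ℝ) < 1 + u := by linarith
  have heu : (0:ℝ) < e + u := by linarith
  set q : ℝ := (1+u) / (e+u) with hq
  have hq1 : q ≤ 1 := by
    rw [hq, div_le_one heu]; linarith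
  have hqi : e⁻¹ ≤ q := by
    rw [hq, le_div_iff₀ heu, inv_mul_le_iff₀ (by linarith)]
    have : e + u ≤ e * (1 + u) := by nlinarith
    linarith
  have hc := chord q hqi hq1
  rw [hq, Real.log_div (ne_of_gt h1u) (ne_of_gt heu)] at hc
  have hne1 : e - 1 ≠ 0 := by intro h; linarith
  have hne2 : e + u ≠ 0 := ne_of_gt heu
  have hqeq : e / (e - 1) * ((1+u)/(e+u) - 1) = -(e / (e+u)) := by
    field_simp
    ring
  rw [hqeq] at hc
  linarith

lemma f_nonneg {u : ℝ} (hu : 0 ≤ u) :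
    0 ≤ (1+u) * Real.log (1+u) - u * Real.log (Real.exp 1 + u) := by
  have he : (1:ℝ) < Real.exp 1 := by
    have := Real.add_one_lt_exp (one_ne_zero); linarith
  set f : ℝ → ℝ := fun u => (1+u) * Real.log (1+u) - u * Real.log (Real.exp 1 + u) with hf
  have hderiv : ∀ v : ℝ, 0 < v → HasDerivAt f
      (Real.log (1+v) - Real.log (Real.exp 1 + v) + Real.exp 1 / (Real.exp 1 + v)) v := by
    intro v hv
    have h1v : (0:ℝ) < 1 + v := by linarith
    have hev : (0:ℝ) < Real.exp 1 + v := by linarith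
    have d1 : HasDerivAt (fun w : ℝ => 1 + w) 1 v := by
      simpa using (hasDerivAt_id v).const_add 1
    have d2 : HasDerivAt (fun w : ℝ => Real.log (1 + w)) (1 / (1 + v)) v :=
      d1.log (ne_of_gt h1v)
    have d3 : HasDerivAt (fun w : ℝ => Real.exp 1 + w) 1 v := by
      simpa using (hasDerivAt_id v).const_add (Real.exp 1)
    have d4 : HasDerivAt (fun w : ℝ => Real.log (Real.exp 1 + w)) (1 / (Real.exp 1 + v)) v :=
      d3.log (ne_of_gt hev)
    have d5 : HasDerivAt (fun w : ℝ => (1 + w) * Real.log (1 + w))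
        (1 * Real.log (1 + v) + (1 + v) * (1 / (1 + v))) v := d1.mul d2
    have d6 : HasDerivAt (fun w : ℝ => w * Real.log (Real.exp 1 + w))
        (1 * Real.log (Real.exp 1 + v) + v * (1 / (Real.exp 1 + v))) v :=
      (hasDerivAt_id v).mul d4
    have := d5.sub d6
    refine this.congr_deriv ?_
    have e1 : (1 + v) * (1 / (1 + v)) = 1 := by rw [mul_one_div, div_self (ne_of_gt h1v)]
    have e3 : Real.exp 1 / (Real.exp 1 + v) + v * (1 / (Real.exp 1 + v)) = 1 := by
      rw [mul_one_div, ← add_div, div_self (ne_of_gt hev)]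
    linarith
  have hmono : MonotoneOn f (Set.Ici (0:ℝ)) := by
    apply monotoneOn_of_deriv_nonneg (convex_Ici 0)
    · intro v hv
      simp only [Set.mem_Ici] at hv
      have h1v : (0:ℝ) < 1 + v := by linarith
      have hev : (0:ℝ) < Real.exp 1 + v := by linarith
      apply ContinuousAt.continuousWithinAt
      exact ((continuousAt_const.add continuousAt_id).mul
        ((Real.continuousAt_log (ne_of_gt h1v)).comp (continuousAt_const.add continuousAt_id))).sub
        (continuousAt_id.mul
        ((Real.continuousAt_log (ne_of_gt hev)).comp (continuousAt_const.add continuousAt_id)))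
    · intro v hv
      rw [interior_Ici] at hv
      exact ((hderiv v hv).differentiableAt).differentiableWithinAt
    · intro v hv
      rw [interior_Ici] at hv
      rw [(hderiv v hv).deriv]
      exact psi_nonneg (le_of_lt hv)
  have h0 : f 0 = 0 := by simp [hf]
  have := hmono (Set.self_mem_Ici) (Set.mem_Ici.mpr hu) hu
  rw [h0] at this
  exact this

theorem stmt_19 (x : ℝ) (hx : 0 < x) :
    (1 + x) * (Real.exp 1 - (1 + 1/x) ^ x) ≤ Real.exp 1 - 1 ∧
    Real.exp 1 - (1 + 1/x) ^ x ≤ (Real.exp 1 - 1)/(1 + x) := by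
  have he : (1:ℝ) < Real.exp 1 := by
    have := Real.add_one_lt_exp (one_ne_zero); linarith
  set e := Real.exp 1 with hE
  have hxne : x ≠ 0 := ne_of_gt hx
  have hu : (0:ℝ) ≤ 1/x := by positivity
  have hb : (0:ℝ) < 1 + 1/x := by linarith
  have hm : (0:ℝ) < e + 1/x := by linarith
  set L : ℝ := Real.log (1 + 1/x) with hL
  set M : ℝ := Real.log (e + 1/x) with hM
  have hf := f_nonneg hu
  rw [← hE, ← hL, ← hM] at hf
  -- hf : 0 ≤ (1 + 1/x) * L - (1/x) * M
  have key : M ≤ (x + 1) * L := by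
    have h2 : x * ((1/x) * M) ≤ x * ((1 + 1/x) * L) :=
      mul_le_mul_of_nonneg_left (by linarith) (le_of_lt hx)
    have e1 : x * ((1/x) * M) = M := by field_simp
    have e2 : x * ((1 + 1/x) * L) = (x + 1) * L := by field_simp
    rw [e1, e2] at h2
    exact h2
  have hxL : Real.log ((e + 1/x) / (1 + 1/x)) ≤ x * L := by
    rw [Real.log_div (ne_of_gt hm) (ne_of_gt hb), ← hM, ← hL]
    nlinarith
  have hpow : (1 + 1/x) ^ x = Real.exp (x * L) := by
    rw [Real.rpow_def_of_pos hb, hL, mul_comm]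
  have hplb : (e * x + 1) / (x + 1) ≤ (1 + 1/x) ^ x := by
    have h3 : (e + 1/x) / (1 + 1/x) ≤ Real.exp (x * L) := by
      calc (e + 1/x) / (1 + 1/x) = Real.exp (Real.log ((e + 1/x) / (1 + 1/x))) := by
            rw [Real.exp_log (by positivity)]
        _ ≤ Real.exp (x * L) := Real.exp_le_exp.mpr hxL
    have h4 : (e + 1/x) / (1 + 1/x) = (e * x + 1) / (x + 1) := by
      rw [div_eq_div_iff (ne_of_gt hb) (by positivity)]
      field_simp
    rw [hpow, ← h4]
    exact h3
  have hx1 : (0:ℝ) < x + 1 := by linarith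
  have hp' : e * x + 1 ≤ (1 + 1/x) ^ x * (x + 1) := by
    rw [← div_le_iff₀ hx1] at *
    exact hplb
  constructor
  · nlinarith
  · rw [le_div_iff₀ (by linarith : (0:ℝ) < 1 + x)]
    nlinarith
end
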